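/- arXiv:2505.02754 — 6 statements merged into one kernel-verified Lean document; each statement's English description precedes it below -/
import Mathlib

section
/- If f is an entire function on ℂ, U ~ N(0, σ²) and V ~ N(0, σ²) are independent real Gaussian random variables independent of the real random variable X, and f(X + U + iV) is integrable, then E[f(X + U + iV) | X] = f(X). -/
/-!
Conditioning on `X` and using independence, `E[f(X + U + iV) | X] = g(X)` with
`g(c) = E[f(c + Z)]` and `Z = U + iV`. The law of `Z` is invariant under every rotation
`z ↦ e^{iθ} z` (the product of a centered Gaussian measure with itself is rotation invariant),
so `g(c)` is also the average over `θ ∈ [0, 2π]` of `E[f(c + e^{iθ} Z)]`. Exchanging the two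
integrals, the inner one is the circle average of the entire function `w ↦ f(c + w Z)` over the
unit circle, which is `f(c)` by the mean value property.
-/

open MeasureTheory ProbabilityTheory Complex Real Set

section MeanValue

variable {E : Type*} [NormedAddCommGroup E] [NormedSpace ℂ E] [CompleteSpace E] {f : ℂ → E}

theorem Differentiable.intervalIntegral_comp_exp_mul (hf : Differentiable ℂ f) (z : ℂ) :
    ∫ θ in 0..2 * π, f (cexp (θ * I) * z) = (2 * π) • f 0 := by
  have h := (hf.comp (differentiable_id.mul_const z)).diffContOnCl.circleAverage (c := 0) (R := 1)
  simp only [circleAverage_def, circleMap, Function.comp_apply, id, ofReal_one, one_mul, zero_add,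
    zero_mul] at h
  rw [← h, smul_inv_smul₀ (by positivity)]

theorem Differentiable.integral_eq_measureReal_smul_of_measurePreserving_exp_mul
    {ν : Measure ℂ} [SFinite ν] (hν : ∀ θ : ℝ, MeasurePreserving (cexp (θ * I) * ·) ν ν)
    (hf : Differentiable ℂ f) (hint : Integrable f ν) :
    ∫ z, f z ∂ν = ν.real univ • f 0 := by
  have hemb (θ : ℝ) := measurableEmbedding_mulLeft₀ (exp_ne_zero (θ * I))
  have hprod : Integrable (fun p : ℝ × ℂ => f (cexp (p.1 * I) * p.2))
      ((volume.restrict (Ioc 0 (2 * π))).prod ν) := by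
    refine (integrable_prod_iff (hf.continuous.comp (by fun_prop)).aestronglyMeasurable).2
      ⟨ae_of_all _ fun θ => (hν θ).integrable_comp_of_integrable hint, ?_⟩
    simpa only [Function.comp_apply, (hν _).integral_comp (hemb _) (‖f ·‖)]
      using integrable_const (μ := volume.restrict (Ioc 0 (2 * π))) (∫ z, ‖f z‖ ∂ν)
  have hswap : ∫ θ in 0..2 * π, ∫ z, f (cexp (θ * I) * z) ∂ν
      = ∫ z, (∫ θ in 0..2 * π, f (cexp (θ * I) * z)) ∂ν := by
    simp only [intervalIntegral.integral_of_le two_pi_pos.le]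
    exact integral_integral_swap (f := fun (θ : ℝ) (z : ℂ) => f (cexp (θ * I) * z)) hprod
  refine smul_right_injective E two_pi_pos.ne' ?_
  calc (2 * π) • ∫ z, f z ∂ν = ∫ θ in 0..2 * π, ∫ z, f (cexp (θ * I) * z) ∂ν := by
        simp [(hν _).integral_comp (hemb _) f]
    _ = ∫ z, (2 * π) • f 0 ∂ν := by rw [hswap]; simp only [hf.intervalIntegral_comp_exp_mul]
    _ = (2 * π) • ν.real univ • f 0 := by rw [integral_const, smul_comm]

theorem Complex.exp_mul_measurableEquivRealProd_symm (θ : ℝ) (w : ℝ × ℝ) :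
    cexp (θ * I) * measurableEquivRealProd.symm w
      = measurableEquivRealProd.symm (ContinuousLinearMap.rotation (-θ) w) := by
  apply Complex.ext <;>
    simp [measurableEquivRealProd_symm_apply, ContinuousLinearMap.rotation_apply,
      exp_ofReal_mul_I_re, exp_ofReal_mul_I_im] <;> ring

theorem ProbabilityTheory.IsGaussian.measurePreserving_exp_mul_map_prod {μ : Measure ℝ}
    [IsGaussian μ] (hμ : μ[id] = 0) (θ : ℝ) :
    MeasurePreserving (cexp (θ * I) * ·) ((μ.prod μ).map measurableEquivRealProd.symm)
      ((μ.prod μ).map measurableEquivRealProd.symm) := by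
  refine ⟨by fun_prop, ?_⟩
  have hcomm : (cexp (θ * I) * ·) ∘ measurableEquivRealProd.symm
      = measurableEquivRealProd.symm ∘ ContinuousLinearMap.rotation (-θ) :=
    funext (exp_mul_measurableEquivRealProd_symm θ)
  rw [Measure.map_map (by fun_prop) (by fun_prop), hcomm,
    ← Measure.map_map (by fun_prop) (by fun_prop), map_rotation_eq_self hμ]

theorem Differentiable.integral_comp_add_isGaussian_prod {μ : Measure ℝ} [IsGaussian μ]
    (hμ : μ[id] = 0) (hf : Differentiable ℂ f) (c : ℂ)
    (hint : Integrable (fun w => f (c + measurableEquivRealProd.symm w)) (μ.prod μ)) :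
    ∫ w, f (c + measurableEquivRealProd.symm w) ∂(μ.prod μ) = f c := by
  rw [← integral_map_equiv measurableEquivRealProd.symm (f <| c + ·)]
  have := Measure.isProbabilityMeasure_map (μ := μ.prod μ)
    measurableEquivRealProd.symm.measurable.aemeasurable
  simpa using (hf.comp ((differentiable_const c).add differentiable_id)
    ).integral_eq_measureReal_smul_of_measurePreserving_exp_mul
    (IsGaussian.measurePreserving_exp_mul_map_prod hμ) ((integrable_map_equiv _ _).2 hint)

end MeanValue

namespace ProbabilityTheory

variable {Ω α β F : Type*} {mΩ : MeasurableSpace Ω} {μ : Measure Ω} [IsFiniteMeasure μ]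
  {mα : MeasurableSpace α} [MeasurableSpace β] [StandardBorelSpace β] [Nonempty β]
  {X : Ω → α} {Y : Ω → β}

theorem IndepFun.condDistrib_ae_eq_const (hXY : IndepFun X Y μ) (hX : AEMeasurable X μ)
    (hY : AEMeasurable Y μ) : condDistrib Y X μ =ᵐ[μ.map X] Kernel.const α (μ.map Y) :=
  (condDistrib_ae_eq_iff_measure_eq_compProd X hY _).2 <| by
    rw [Measure.compProd_const]
    exact (indepFun_iff_map_prod_eq_prod_map_map hX hY).1 hXY

theorem IndepFun.condExp_comp_ae_eq_integral [NormedAddCommGroup F] [NormedSpace ℝ F]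
    [CompleteSpace F] (hXY : IndepFun X Y μ) (hX : Measurable X) (hY : AEMeasurable Y μ)
    {f : α × β → F} (hf : Integrable f ((μ.map X).prod (μ.map Y))) :
    μ[fun ω => f (X ω, Y ω) | mα.comap X] =ᵐ[μ] fun ω => ∫ y, f (X ω, y) ∂(μ.map Y) := by
  rw [← (indepFun_iff_map_prod_eq_prod_map_map hX.aemeasurable hY).1 hXY] at hf
  filter_upwards [condExp_prod_ae_eq_integral_condDistrib' hX hY hf,
    ae_of_ae_map hX.aemeasurable (hXY.condDistrib_ae_eq_const hX.aemeasurable hY)] with ω h1 h2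
  rw [h1, h2, Kernel.const_apply]

end ProbabilityTheory

theorem entire_function_gaussian_unbiased_general
    {Ω : Type*} [MeasurableSpace Ω] (μ : Measure Ω) [IsProbabilityMeasure μ]
    (f : ℂ → ℂ) (hf : Differentiable ℂ f)
    (X U V : Ω → ℝ) (hX : Measurable X) (hU : Measurable U) (hV : Measurable V)
    (σ2 : NNReal)
    (hUlaw : Measure.map U μ = gaussianReal 0 σ2)
    (hVlaw : Measure.map V μ = gaussianReal 0 σ2)
    (hindep : iIndepFun ![X, U, V] μ)
    (hint : Integrable (fun ω => f (((X ω + U ω : ℝ) : ℂ) + Complex.I * (V ω : ℂ))) μ) :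
    μ[(fun ω => f (((X ω + U ω : ℝ) : ℂ) + Complex.I * (V ω : ℂ)))
        | MeasurableSpace.comap X inferInstance]
      =ᵐ[μ] fun ω => f ((X ω : ℝ) : ℂ) := by
  have hmeas : ∀ i, Measurable (![X, U, V] i) := fun i => by fin_cases i <;> assumption
  have hXW : IndepFun X (fun ω => (U ω, V ω)) μ :=
    (hindep.indepFun_prodMk hmeas 1 2 0 (by decide) (by decide)).symm
  have hW : μ.map (fun ω => (U ω, V ω)) = (gaussianReal 0 σ2).prod (gaussianReal 0 σ2) := by
    rw [(indepFun_iff_map_prod_eq_prod_map_map hU.aemeasurable hV.aemeasurable).1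
      (hindep.indepFun (i := 1) (j := 2) (by decide)), hUlaw, hVlaw]
  set Ψ : ℝ × (ℝ × ℝ) → ℂ := fun p => f (((p.1 + p.2.1 : ℝ) : ℂ) + I * (p.2.2 : ℂ))
  have hΨ (x : ℝ) (w : ℝ × ℝ) : Ψ (x, w) = f (x + measurableEquivRealProd.symm w) := by
    simp only [Ψ]; congr 1; apply Complex.ext <;> simp [measurableEquivRealProd_symm_apply]
  have hΨint : Integrable Ψ ((μ.map X).prod ((gaussianReal 0 σ2).prod (gaussianReal 0 σ2))) := by
    have hΨcont : Continuous Ψ := hf.continuous.comp (by fun_prop)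
    rw [← hW, ← (indepFun_iff_map_prod_eq_prod_map_map hX.aemeasurable
      (hU.prodMk hV).aemeasurable).1 hXW, integrable_map_measure hΨcont.aestronglyMeasurable
      (hX.prodMk (hU.prodMk hV)).aemeasurable]
    exact hint
  filter_upwards [hXW.condExp_comp_ae_eq_integral hX (hU.prodMk hV).aemeasurable (hW ▸ hΨint),
    ae_of_ae_map hX.aemeasurable hΨint.prod_right_ae] with ω hcond hsection
  rw [hcond, hW]
  simp only [hΨ] at hsection ⊢
  exact hf.integral_comp_add_isGaussian_prod integral_id_gaussianReal _ hsection

/-- If `f` is entire, `U ~ N(0, σ²)` and `V ~ N(0, σ²)` are independent real Gaussians,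
both independent of the real random variable `X`, and `f(X + U + iV)` is integrable, then
`E[f(X + U + iV) | X] = f(X)`. -/
theorem entire_function_gaussian_unbiased
    {Ω : Type*} [MeasurableSpace Ω] (μ : Measure Ω) [IsProbabilityMeasure μ]
    (f : ℂ → ℂ) (hf : Differentiable ℂ f)
    (X U V : Ω → ℝ) (hX : Measurable X) (hU : Measurable U) (hV : Measurable V)
    (σ2 : NNReal) (hσ2 : 0 < σ2)
    (hUlaw : Measure.map U μ = gaussianReal 0 σ2)
    (hVlaw : Measure.map V μ = gaussianReal 0 σ2)
    (hindep : iIndepFun ![X, U, V] μ)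
    (hint : Integrable (fun ω => f (((X ω + U ω : ℝ) : ℂ) + Complex.I * (V ω : ℂ))) μ) :
    μ[(fun ω => f (((X ω + U ω : ℝ) : ℂ) + Complex.I * (V ω : ℂ)))
        | MeasurableSpace.comap X inferInstance]
      =ᵐ[μ] fun ω => f ((X ω : ℝ) : ℂ) :=
  entire_function_gaussian_unbiased_general μ f hf X U V hX hU hV σ2 hUlaw hVlaw hindep hint
end

section
/- Let U be a real random variable with mean zero, variance σ², and third central moment μ₃ = E(U³). Let C = U + a + bi + cj + dk be quaternion-valued with a = 0 and b² + c² + d² = σ². Then Re E(C³) = μ₃. In particular, if U is asymmetric (μ₃ ≠ 0), it is impossible to choose (b, c, d) ∈ ℝ³ with Re E(C²) = 0 and Re E(C³) = 0 simultaneously. -/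
open MeasureTheory

lemma quat_sq_re (u b c d : ℝ) :
    (((⟨u, b, c, d⟩ : Quaternion ℝ)) ^ 2).re = u ^ 2 - (b ^ 2 + c ^ 2 + d ^ 2) := by
  simp [pow_succ, Quaternion.re_mul]
  ring

lemma quat_cube_re (u b c d : ℝ) :
    (((⟨u, b, c, d⟩ : Quaternion ℝ)) ^ 3).re = u ^ 3 - 3 * (b ^ 2 + c ^ 2 + d ^ 2) * u := by
  simp [pow_succ, Quaternion.re_mul, Quaternion.imI_mul, Quaternion.imJ_mul,
    Quaternion.imK_mul]
  ring

/-- Let `U` be a real random variable with mean zero, variance `σ²`, and third central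
moment `μ₃`. For the quaternion `C = U + b i + c j + d k` (i.e. `a = 0`) with
`b² + c² + d² = σ²`, we have `Re E(C³) = μ₃`. In particular, if `μ₃ ≠ 0` then there is
no choice of `(b, c, d) ∈ ℝ³` making `Re E(C²) = 0` and `Re E(C³) = 0` simultaneously. -/
theorem quaternion_cannot_kill_third_moment
    {Ω : Type*} [MeasurableSpace Ω] (μ : Measure Ω) [IsProbabilityMeasure μ]
    (U : Ω → ℝ) (hU : Measurable U)
    (hU1 : Integrable U μ) (hU2 : Integrable (fun ω => (U ω) ^ 2) μ)
    (hU3 : Integrable (fun ω => (U ω) ^ 3) μ)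
    (σ2 μ3 : ℝ)
    (hmean : ∫ ω, U ω ∂μ = 0)
    (hvar : ∫ ω, (U ω) ^ 2 ∂μ = σ2)
    (hm3 : ∫ ω, (U ω) ^ 3 ∂μ = μ3) :
    (∀ b c d : ℝ, b ^ 2 + c ^ 2 + d ^ 2 = σ2 →
        ∫ ω, (((⟨U ω, b, c, d⟩ : Quaternion ℝ) ^ 3).re) ∂μ = μ3) ∧
      (μ3 ≠ 0 → ¬ ∃ b c d : ℝ,
        (∫ ω, (((⟨U ω, b, c, d⟩ : Quaternion ℝ) ^ 2).re) ∂μ = 0) ∧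
        (∫ ω, (((⟨U ω, b, c, d⟩ : Quaternion ℝ) ^ 3).re) ∂μ = 0)) := by
  have key3 : ∀ b c d : ℝ,
      ∫ ω, (((⟨U ω, b, c, d⟩ : Quaternion ℝ) ^ 3).re) ∂μ
        = μ3 - 3 * (b ^ 2 + c ^ 2 + d ^ 2) * 0 := by
    intro b c d
    have : (fun ω => (((⟨U ω, b, c, d⟩ : Quaternion ℝ) ^ 3).re))
        = fun ω => (U ω) ^ 3 - 3 * (b ^ 2 + c ^ 2 + d ^ 2) * U ω := by
      funext ω; exact quat_cube_re _ _ _ _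
    rw [this, integral_sub hU3 ((hU1.const_mul _))]
    rw [hm3, integral_const_mul, hmean]
  have key2 : ∀ b c d : ℝ,
      ∫ ω, (((⟨U ω, b, c, d⟩ : Quaternion ℝ) ^ 2).re) ∂μ
        = σ2 - (b ^ 2 + c ^ 2 + d ^ 2) := by
    intro b c d
    have : (fun ω => (((⟨U ω, b, c, d⟩ : Quaternion ℝ) ^ 2).re))
        = fun ω => (U ω) ^ 2 - (b ^ 2 + c ^ 2 + d ^ 2) := by
      funext ω; exact quat_sq_re _ _ _ _
    rw [this, integral_sub hU2 (integrable_const _), hvar, integral_const]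
    simp
  constructor
  · intro b c d _
    rw [key3]; ring
  · rintro hμ3 ⟨b, c, d, h2, h3⟩
    rw [key3] at h3
    simp at h3
    exact hμ3 h3
end

section
/- For the 2×2 complex matrix C = (a+bi)·I₂ + (c+di)·J₂ (the matrix representation of a tessarine), for every positive integer ℓ, C^ℓ = (1/2)·([z₁^ℓ + z₂^ℓ]·I₂ + [z₂^ℓ − z₁^ℓ]·J₂), where z₁ = (a−c) + i(b−d) and z₂ = (a+c) + i(b+d). -/
/-- The tessarine `a + b î + c ĵ + d k̂` as the 2×2 complex matrix
`(a + b i) I₂ + (c + d i) J₂` with `J₂ = [[0,1],[1,0]]`. -/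
noncomputable def tess (a b c d : ℝ) : Matrix (Fin 2) (Fin 2) ℂ :=
  ((a : ℂ) + b * Complex.I) • (1 : Matrix (Fin 2) (Fin 2) ℂ)
    + ((c : ℂ) + d * Complex.I) • !![0, 1; 1, 0]

/-- For the matrix representation `C = (a+bi) I₂ + (c+di) J₂` of a tessarine and any
positive integer `ℓ`, `C^ℓ = (1/2) ((z₁^ℓ + z₂^ℓ) I₂ + (z₂^ℓ - z₁^ℓ) J₂)`, where
`z₁ = (a-c) + (b-d) i` and `z₂ = (a+c) + (b+d) i`. -/
theorem tessarine_power (a b c d : ℝ) (ℓ : ℕ) (hℓ : 0 < ℓ) :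
    (tess a b c d) ^ ℓ
      = ((1 : ℂ) / 2) •
          ((((((a - c : ℝ) : ℂ) + ((b - d : ℝ) : ℂ) * Complex.I) ^ ℓ
              + (((a + c : ℝ) : ℂ) + ((b + d : ℝ) : ℂ) * Complex.I) ^ ℓ)
                • (1 : Matrix (Fin 2) (Fin 2) ℂ))
            + (((((a + c : ℝ) : ℂ) + ((b + d : ℝ) : ℂ) * Complex.I) ^ ℓ
              - (((a - c : ℝ) : ℂ) + ((b - d : ℝ) : ℂ) * Complex.I) ^ ℓ)
                • !![0, 1; 1, 0])) := by
  clear hℓ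
  induction ℓ with
  | zero =>
      ext i j
      fin_cases i <;> fin_cases j <;>
        simp [Matrix.one_apply] <;> ring
  | succ n ih =>
      rw [pow_succ, ih]
      ext i j
      fin_cases i <;> fin_cases j <;>
        simp [tess, Matrix.mul_apply, Fin.sum_univ_two, Matrix.one_apply, pow_succ,
          Complex.ext_iff] <;>
        constructor <;> push_cast <;> ring
end

section
/- For the tessarine C with matrix representation (a+bi)·I₂ + (c+di)·J₂, the real part of C^ℓ (the real part of its diagonal entry) equals (1/2)·[((a−c)² + (b−d)²)^{ℓ/2}·cos(ℓ·arg((a−c)+i(b−d))) + ((a+c)² + (b+d)²)^{ℓ/2}·cos(ℓ·arg((a+c)+i(b+d)))] for every positive integer ℓ. -/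
/-- The real part (coefficient of `1`) of a tessarine: the real part of the diagonal
entry of its matrix representation. -/
noncomputable def tessRe (M : Matrix (Fin 2) (Fin 2) ℂ) : ℝ := (M 0 0).re

/-!
The vectors `(1, 1)` and `(1, -1)` are eigenvectors of `z I₂ + w J₂` with eigenvalues `z + w` and
`z - w`, so the diagonal entry of its `ℓ`-th power is the average of `(z + w)^ℓ` and `(z - w)^ℓ`.
With `z = a + b i`, `w = c + d i`, de Moivre's formula gives the real parts of these two powers.
-/

namespace Matrix

variable {n R : Type*} [Fintype n] [DecidableEq n] [CommSemiring R]

theorem pow_mulVec_of_mulVec_eq_smul {A : Matrix n n R} {v : n → R} {μ : R}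
    (h : A *ᵥ v = μ • v) (k : ℕ) : A ^ k *ᵥ v = μ ^ k • v := by
  induction k with
  | zero => simp
  | succ k ih => rw [pow_succ, ← mulVec_mulVec, h, mulVec_smul, ih, smul_smul, pow_succ']

end Matrix

section

open Matrix

variable {R : Type*} [CommRing R]

theorem smul_one_add_smul_swap_mulVec_one_one (z w : R) :
    (z • (1 : Matrix (Fin 2) (Fin 2) R) + w • !![0, 1; 1, 0]) *ᵥ ![1, 1]
      = (z + w) • ![1, 1] := by
  ext i; fin_cases i <;> simp [mulVec, dotProduct, Fin.sum_univ_two, add_comm]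

theorem smul_one_add_smul_swap_mulVec_one_neg_one (z w : R) :
    (z • (1 : Matrix (Fin 2) (Fin 2) R) + w • !![0, 1; 1, 0]) *ᵥ ![1, -1]
      = (z - w) • ![1, -1] := by
  ext i; fin_cases i <;> simp [mulVec, dotProduct, Fin.sum_univ_two] <;> ring

theorem two_mul_smul_one_add_smul_swap_pow_zero_zero (z w : R) (k : ℕ) :
    2 * ((z • 1 + w • !![0, 1; 1, 0] : Matrix (Fin 2) (Fin 2) R) ^ k) 0 0
      = (z + w) ^ k + (z - w) ^ k := by
  have hsum := congrFun
    (pow_mulVec_of_mulVec_eq_smul (smul_one_add_smul_swap_mulVec_one_one z w) k) 0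
  have hdiff := congrFun
    (pow_mulVec_of_mulVec_eq_smul (smul_one_add_smul_swap_mulVec_one_neg_one z w) k) 0
  generalize (_ ^ k : Matrix (Fin 2) (Fin 2) R) = A at hsum hdiff ⊢
  simp only [mulVec, dotProduct, Fin.sum_univ_two, cons_val_zero, cons_val_one, cons_val_fin_one,
    Pi.smul_apply, smul_eq_mul, mul_one, mul_neg] at hsum hdiff
  linear_combination hsum + hdiff

end

namespace Complex

theorem re_pow_eq_norm_pow_mul_cos (z : ℂ) (k : ℕ) :
    (z ^ k).re = ‖z‖ ^ k * Real.cos (k * arg z) := by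
  conv_lhs => rw [← norm_mul_cos_add_sin_mul_I z]
  rw [mul_pow, cos_add_sin_mul_I_pow, ← ofReal_pow, re_ofReal_mul, ← ofReal_natCast, ← ofReal_mul,
    ← ofReal_cos, ← ofReal_sin, ← mk_eq_add_mul_I]

theorem re_add_mul_I_pow (x y : ℝ) (k : ℕ) :
    ((x + y * I) ^ k).re = (x ^ 2 + y ^ 2) ^ ((k : ℝ) / 2) * Real.cos (k * arg (x + y * I)) := by
  rw [re_pow_eq_norm_pow_mul_cos, norm_add_mul_I, Real.rpow_div_two_eq_sqrt _ (by positivity),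
    Real.rpow_natCast]

end Complex

theorem tessarine_power_re_general (a b c d : ℝ) (ℓ : ℕ) :
    tessRe ((tess a b c d) ^ ℓ)
      = (1 / 2) *
          (((a - c) ^ 2 + (b - d) ^ 2) ^ ((ℓ : ℝ) / 2)
              * Real.cos (ℓ * Complex.arg (((a - c : ℝ) : ℂ) + ((b - d : ℝ) : ℂ) * Complex.I))
            + ((a + c) ^ 2 + (b + d) ^ 2) ^ ((ℓ : ℝ) / 2)
              * Real.cos (ℓ * Complex.arg (((a + c : ℝ) : ℂ) + ((b + d : ℝ) : ℂ) * Complex.I))) := by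
  have hentry := two_mul_smul_one_add_smul_swap_pow_zero_zero
    ((a : ℂ) + b * Complex.I) ((c : ℂ) + d * Complex.I) ℓ
  have hsum : (a : ℂ) + b * Complex.I + (c + d * Complex.I)
      = ((a + c : ℝ) : ℂ) + ((b + d : ℝ) : ℂ) * Complex.I := by
    push_cast; ring
  have hdiff : (a : ℂ) + b * Complex.I - (c + d * Complex.I)
      = ((a - c : ℝ) : ℂ) + ((b - d : ℝ) : ℂ) * Complex.I := by
    push_cast; ring
  rw [hsum, hdiff] at hentry
  calc tessRe (tess a b c d ^ ℓ) = (1 / 2) * (2 * (tess a b c d ^ ℓ) 0 0).re := by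
        simp [tessRe]
    _ = _ := by
        rw [tess, hentry, Complex.add_re, Complex.re_add_mul_I_pow, Complex.re_add_mul_I_pow,
          add_comm]

/-- The real part of the `ℓ`-th power of the tessarine `a + b î + c ĵ + d k̂` equals
`(1/2) [((a-c)² + (b-d)²)^{ℓ/2} cos(ℓ arg((a-c) + (b-d)i))
  + ((a+c)² + (b+d)²)^{ℓ/2} cos(ℓ arg((a+c) + (b+d)i))]`. -/
theorem tessarine_power_re (a b c d : ℝ) (ℓ : ℕ) (hℓ : 0 < ℓ) :
    tessRe ((tess a b c d) ^ ℓ)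
      = (1 / 2) *
          (((a - c) ^ 2 + (b - d) ^ 2) ^ ((ℓ : ℝ) / 2)
              * Real.cos (ℓ * Complex.arg (((a - c : ℝ) : ℂ) + ((b - d : ℝ) : ℂ) * Complex.I))
            + ((a + c) ^ 2 + (b + d) ^ 2) ^ ((ℓ : ℝ) / 2)
              * Real.cos (ℓ * Complex.arg (((a + c : ℝ) : ℂ) + ((b + d : ℝ) : ℂ) * Complex.I))) :=
  tessarine_power_re_general a b c d ℓ
end

section
/- For a tessarine C = a + bî + cĵ + dk̂, the matrix exponential of its matrix representation equals exp(a+bi)·[cosh(c+di)·I₂ + sinh(c+di)·J₂]; consequently Re(exp C) = exp(a)·[cos(b)cos(d)cosh(c) − sin(b)sin(d)sinh(c)]. -/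
open NormedSpace

/-!
Since `J₂² = 1`, the even powers of `J₂` are `I₂` and the odd ones are `J₂`, so splitting the
exponential series of `w • J₂` by parity gives `exp (w • J₂) = cosh w • I₂ + sinh w • J₂`. The scalar
part `z • I₂` commutes with `w • J₂` and contributes the factor `exp z`. The real part of the
`(1,1)` entry `exp z * cosh w` follows from `cosh (c + d i) = cosh c cos d + i sinh c sin d`.
-/

theorem pow_eq_ite_even_of_mul_self_eq_one {M : Type*} [Monoid M] {x : M} (hx : x * x = 1)
    (n : ℕ) : x ^ n = if Even n then 1 else x := by
  induction n with
  | zero => simp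
  | succ n ih =>
    rw [pow_succ, ih]
    by_cases hn : Even n <;> simp [hn, Nat.even_add_one, hx]

theorem exp_smul_of_mul_self_eq_one {𝔸 : Type*} [Ring 𝔸] [Algebra ℂ 𝔸] [TopologicalSpace 𝔸]
    [IsTopologicalRing 𝔸] [ContinuousSMul ℂ 𝔸] [T2Space 𝔸] {x : 𝔸} (hx : x * x = 1) (w : ℂ) :
    exp (w • x) = Complex.cosh w • 1 + Complex.sinh w • x := by
  have hexp (u : ℂ) : HasSum (fun n : ℕ => (n.factorial⁻¹ : ℂ) * u ^ n) (Complex.exp u) := by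
    simpa [Complex.exp_eq_exp_ℂ] using exp_series_hasSum_exp' (𝕂 := ℂ) u
  have hsum := (((hexp w).add (hexp (-w))).div_const 2).smul_const (1 : 𝔸) |>.add
    ((((hexp w).sub (hexp (-w))).div_const 2).smul_const x)
  rw [← Complex.two_cosh, ← Complex.two_sinh, mul_div_cancel_left₀ _ two_ne_zero,
    mul_div_cancel_left₀ _ two_ne_zero] at hsum
  rw [congr_fun (exp_eq_tsum ℂ) (w • x), ← hsum.tsum_eq]
  refine tsum_congr fun n => ?_
  rw [smul_pow, pow_eq_ite_even_of_mul_self_eq_one hx, smul_smul, neg_pow]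
  rcases Nat.even_or_odd n with hn | hn
  · simp [hn, hn.neg_one_pow]
  · simp [hn.neg_one_pow, Nat.not_even_iff_odd.mpr hn]

theorem exp_smul_one_add_smul_of_mul_self_eq_one {𝔸 : Type*} [NormedRing 𝔸]
    [NormedAlgebra ℂ 𝔸] [CompleteSpace 𝔸] {x : 𝔸} (hx : x * x = 1) (z w : ℂ) :
    exp (z • 1 + w • x) = Complex.exp z • (Complex.cosh w • 1 + Complex.sinh w • x) := by
  let _ : NormedAlgebra ℚ 𝔸 := NormedAlgebra.restrictScalars ℚ ℂ 𝔸
  have hcomm : Commute (z • (1 : 𝔸)) (w • x) := ((Commute.one_left x).smul_left z).smul_right w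
  rw [exp_add_of_commute hcomm, exp_smul_of_mul_self_eq_one hx, ← Algebra.algebraMap_eq_smul_one,
    ← algebraMap_exp_comm, Algebra.algebraMap_eq_smul_one, smul_one_mul, Complex.exp_eq_exp_ℂ]

theorem Complex.cosh_add_mul_I (x y : ℝ) :
    cosh (x + y * I) = Real.cosh x * Real.cos y + Real.sinh x * Real.sin y * I := by
  rw [cosh_add, cosh_mul_I, sinh_mul_I, ofReal_cosh, ofReal_sinh, ofReal_cos, ofReal_sin]
  ring

theorem Complex.re_exp_mul_cosh (a b c d : ℝ) :
    (exp (a + b * I) * cosh (c + d * I)).re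
      = Real.exp a * (Real.cos b * Real.cos d * Real.cosh c
          - Real.sin b * Real.sin d * Real.sinh c) := by
  rw [exp_add_mul_I, cosh_add_mul_I, ← ofReal_exp, ← ofReal_cos, ← ofReal_sin]
  simp only [mul_re, add_re, mul_im, add_im, ofReal_re, ofReal_im, I_re, I_im]
  ring

/-- The matrix exponential of the tessarine `C = a + b î + c ĵ + d k̂` equals
`exp(a + bi) (cosh(c + di) I₂ + sinh(c + di) J₂)`; consequently
`Re(exp C) = exp(a) (cos b cos d cosh c - sin b sin d sinh c)`. -/
theorem tessarine_exp (a b c d : ℝ) :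
    exp (tess a b c d)
        = Complex.exp ((a : ℂ) + b * Complex.I) •
            (Complex.cosh ((c : ℂ) + d * Complex.I) • (1 : Matrix (Fin 2) (Fin 2) ℂ)
              + Complex.sinh ((c : ℂ) + d * Complex.I) • !![0, 1; 1, 0])
      ∧ tessRe (exp (tess a b c d))
        = Real.exp a *
            (Real.cos b * Real.cos d * Real.cosh c
              - Real.sin b * Real.sin d * Real.sinh c) := by
  -- `exp` depends only on the topology, so any Banach-algebra norm on matrices will do.
  have hexp : exp (tess a b c d) = _ :=
    open scoped Matrix.Norms.L2Operator in
    exp_smul_one_add_smul_of_mul_self_eq_one (x := !![0, 1; 1, 0])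
      (by simp [Matrix.one_fin_two]) ((a : ℂ) + b * Complex.I) ((c : ℂ) + d * Complex.I)
  refine ⟨hexp, ?_⟩
  rw [tessRe, hexp, ← Complex.re_exp_mul_cosh]
  simp
end

section
/- Let (b,c,d) ∈ ℝ³ with d ≠ 0. The system of equations σ² − b² + c² − d² = 0, μ₃ − 6bcd = 0, μ₄ − 5σ⁴ − 4[b²(c²−d²) + c²d²] = 0 implies μ₃² + 9(5σ⁴ − μ₄)d² − 36σ²d⁴ + 36d⁶ = 0 and μ₃² + 36d²(d² − σ²)c² − 36d²c⁴ = 0. -/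
/-- Resultant elimination: for real constants `σ², μ₃, μ₄` and `(b, c, d) ∈ ℝ³` with
`d ≠ 0`, the system `σ² - b² + c² - d² = 0`, `μ₃ - 6bcd = 0`,
`μ₄ - 5σ⁴ - 4[b²(c² - d²) + c²d²] = 0` implies
`μ₃² + 9(5σ⁴ - μ₄)d² - 36σ²d⁴ + 36d⁶ = 0` and
`μ₃² + 36d²(d² - σ²)c² - 36d²c⁴ = 0`. -/
theorem tessarine_resultant_elimination
    (σ2 μ3 μ4 b c d : ℝ) (hd : d ≠ 0)
    (h1 : σ2 - b ^ 2 + c ^ 2 - d ^ 2 = 0)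
    (h2 : μ3 - 6 * b * c * d = 0)
    (h3 : μ4 - 5 * σ2 ^ 2 - 4 * (b ^ 2 * (c ^ 2 - d ^ 2) + c ^ 2 * d ^ 2) = 0) :
    μ3 ^ 2 + 9 * (5 * σ2 ^ 2 - μ4) * d ^ 2 - 36 * σ2 * d ^ 4 + 36 * d ^ 6 = 0
      ∧ μ3 ^ 2 + 36 * d ^ 2 * (d ^ 2 - σ2) * c ^ 2 - 36 * d ^ 2 * c ^ 4 = 0 := by
  constructor
  · linear_combination (μ3 + 6 * b * c * d) * h2 - 9 * d ^ 2 * h3 - 36 * d ^ 4 * h1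
  · linear_combination (μ3 + 6 * b * c * d) * h2 - 36 * c ^ 2 * d ^ 2 * h1
end
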